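/- arXiv:2010.03171 — 3 statements merged into one kernel-verified Lean document; each statement's English description precedes it below -/
import Mathlib

section
/- Weyl's inequality: if A1, A2, A3 are n×n Hermitian matrices with A3 = A1 + A2, and the eigenvalues of each are listed in decreasing order α^{(m)}_1 ≥ ⋯ ≥ α^{(m)}_n for m ∈ {1,2,3}, then for all i, j with i + j − 1 ≤ n we have α^{(3)}_{i+j−1} ≤ α^{(1)}_i + α^{(2)}_j. -/
/-!
Courant–Fischer in its elementary form: if `λ₀ ≥ ⋯ ≥ λₙ₋₁` are the eigenvalues of a Hermitian `A`,
then `⟪x, A x⟫ ≤ λ_c ‖x‖²` on the span of the eigenvectors of `λ_c, …, λₙ₋₁` (dimension `n - c`)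
and `λ_c ‖x‖² ≤ ⟪x, A x⟫` on the span of those of `λ₀, …, λ_c` (dimension `c + 1`).
For Weyl's inequality take the first subspace for `A1` at `i` and for `A2` at `j`, and the second
for `A3` at `i + j`: their dimensions add up to `2n + 1 > 2n`, so they share a vector `x ≠ 0`, and
`λ³_{i+j} ‖x‖² ≤ ⟪x, A3 x⟫ = ⟪x, A1 x⟫ + ⟪x, A2 x⟫ ≤ (λ¹_i + λ²_j) ‖x‖²`.
-/

/-- The eigenvalues of a Hermitian matrix, listed in decreasing order (with multiplicity). -/
noncomputable def eigDesc {𝕜 : Type*} [RCLike 𝕜] {n : ℕ} {A : Matrix (Fin n) (Fin n) 𝕜}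
    (hA : A.IsHermitian) : Fin n → ℝ :=
  fun i => hA.eigenvalues (Tuple.sort hA.eigenvalues i.rev)

open Module Submodule
open scoped InnerProductSpace

namespace Submodule

variable {K V : Type*} [DivisionRing K] [AddCommGroup V] [Module K V] [FiniteDimensional K V]

theorem inf_ne_bot_of_finrank_lt_add {U W : Submodule K V}
    (h : finrank K V < finrank K U + finrank K W) : U ⊓ W ≠ ⊥ := fun hUW =>
  h.not_ge (finrank_add_finrank_le_of_disjoint (disjoint_iff.mpr hUW))

theorem inf_inf_ne_bot_of_finrank_lt_add_add {U W X : Submodule K V}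
    (h : 2 * finrank K V < finrank K U + finrank K W + finrank K X) : U ⊓ W ⊓ X ≠ ⊥ := by
  have hUW := finrank_sup_add_finrank_inf_eq U W
  have hsup := (U ⊔ W).finrank_le
  exact inf_ne_bot_of_finrank_lt_add (by omega)

end Submodule

namespace OrthonormalBasis

variable {𝕜 E ι : Type*} [RCLike 𝕜] [NormedAddCommGroup E] [InnerProductSpace 𝕜 E] [Fintype ι]
  (b : OrthonormalBasis ι 𝕜 E)

theorem finrank_span_range_subtype (s : Finset ι) :
    finrank 𝕜 (span 𝕜 (Set.range fun k : s => b k)) = s.card :=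
  (finrank_span_eq_card (b.orthonormal.linearIndependent.comp _ Subtype.val_injective)).trans
    (Fintype.card_coe s)

theorem inner_eq_zero_of_mem_span_of_notMem {s : Finset ι} {x : E}
    (hx : x ∈ span 𝕜 (Set.range fun k : s => b k)) {k : ι} (hk : k ∉ s) : ⟪b k, x⟫_𝕜 = 0 := by
  rw [← mem_orthogonal_singleton_iff_inner_right]
  refine span_le.mpr ?_ hx
  rintro _ ⟨j, rfl⟩
  exact mem_orthogonal_singleton_iff_inner_right.mpr
    (b.orthonormal.inner_eq_zero fun h => hk (h ▸ j.2))

variable {T : E →ₗ[𝕜] E} {μ : ι → ℝ}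

theorem re_inner_map_self_eq_sum (hT : T.IsSymmetric) (hb : ∀ k, T (b k) = (μ k : 𝕜) • b k)
    (x : E) : RCLike.re ⟪x, T x⟫_𝕜 = ∑ k, μ k * ‖⟪b k, x⟫_𝕜‖ ^ 2 := by
  rw [← b.sum_inner_mul_inner, map_sum]
  refine Finset.sum_congr rfl fun k _ => ?_
  rw [← hT, hb, inner_smul_left, RCLike.conj_ofReal, ← inner_conj_symm x, mul_left_comm,
    RCLike.conj_mul]
  norm_cast

theorem re_inner_map_self_le_of_mem_span (hT : T.IsSymmetric)
    (hb : ∀ k, T (b k) = (μ k : 𝕜) • b k) {s : Finset ι} {c : ℝ} (hc : ∀ k ∈ s, μ k ≤ c) {x : E}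
    (hx : x ∈ span 𝕜 (Set.range fun k : s => b k)) : RCLike.re ⟪x, T x⟫_𝕜 ≤ c * ‖x‖ ^ 2 := by
  rw [b.re_inner_map_self_eq_sum hT hb, ← b.sum_sq_norm_inner_right, Finset.mul_sum]
  refine Finset.sum_le_sum fun k _ => ?_
  by_cases hk : k ∈ s
  · exact mul_le_mul_of_nonneg_right (hc k hk) (sq_nonneg _)
  · simp [b.inner_eq_zero_of_mem_span_of_notMem hx hk]

theorem mul_le_re_inner_map_self_of_mem_span (hT : T.IsSymmetric)
    (hb : ∀ k, T (b k) = (μ k : 𝕜) • b k) {s : Finset ι} {c : ℝ} (hc : ∀ k ∈ s, c ≤ μ k) {x : E}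
    (hx : x ∈ span 𝕜 (Set.range fun k : s => b k)) : c * ‖x‖ ^ 2 ≤ RCLike.re ⟪x, T x⟫_𝕜 := by
  rw [b.re_inner_map_self_eq_sum hT hb, ← b.sum_sq_norm_inner_right, Finset.mul_sum]
  refine Finset.sum_le_sum fun k _ => ?_
  by_cases hk : k ∈ s
  · exact mul_le_mul_of_nonneg_right (hc k hk) (sq_nonneg _)
  · simp [b.inner_eq_zero_of_mem_span_of_notMem hx hk]

end OrthonormalBasis

namespace Matrix.IsHermitian

variable {𝕜 : Type*} [RCLike 𝕜] {n : ℕ} {A : Matrix (Fin n) (Fin n) 𝕜} (hA : A.IsHermitian)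

theorem eigDesc_antitone : Antitone (eigDesc hA) := fun _ _ h =>
  Tuple.monotone_sort hA.eigenvalues (Fin.rev_le_rev.mpr h)

noncomputable def eigDescBasis : OrthonormalBasis (Fin n) 𝕜 (EuclideanSpace 𝕜 (Fin n)) :=
  hA.eigenvectorBasis.reindex (Fin.revPerm.trans (Tuple.sort hA.eigenvalues)).symm

theorem toEuclideanLin_eigDescBasis (k : Fin n) :
    toEuclideanLin A (hA.eigDescBasis k) = (eigDesc hA k : 𝕜) • hA.eigDescBasis k := by
  rw [eigDescBasis, OrthonormalBasis.reindex_apply, Equiv.symm_symm, Equiv.trans_apply,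
    Fin.revPerm_apply]
  apply WithLp.ofLp_injective
  rw [toLpLin_apply, WithLp.ofLp_toLp, hA.mulVec_eigenvectorBasis, WithLp.ofLp_smul,
    RCLike.real_smul_eq_coe_smul (K := 𝕜)]
  rfl

theorem exists_finrank_eq_forall_re_inner_le_eigDesc (c : Fin n) :
    ∃ V : Submodule 𝕜 (EuclideanSpace 𝕜 (Fin n)), finrank 𝕜 V = n - c ∧
      ∀ x ∈ V, RCLike.re ⟪x, toEuclideanLin A x⟫_𝕜 ≤ eigDesc hA c * ‖x‖ ^ 2 :=
  ⟨_, (hA.eigDescBasis.finrank_span_range_subtype (Finset.Ici c)).trans (Fin.card_Ici c),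
    fun _ => hA.eigDescBasis.re_inner_map_self_le_of_mem_span
      (isSymmetric_toEuclideanLin_iff.mpr hA) hA.toEuclideanLin_eigDescBasis
      fun _ hk => hA.eigDesc_antitone (Finset.mem_Ici.mp hk)⟩

theorem exists_finrank_eq_forall_eigDesc_le_re_inner (c : Fin n) :
    ∃ V : Submodule 𝕜 (EuclideanSpace 𝕜 (Fin n)), finrank 𝕜 V = c + 1 ∧
      ∀ x ∈ V, eigDesc hA c * ‖x‖ ^ 2 ≤ RCLike.re ⟪x, toEuclideanLin A x⟫_𝕜 :=
  ⟨_, (hA.eigDescBasis.finrank_span_range_subtype (Finset.Iic c)).trans (Fin.card_Iic c),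
    fun _ => hA.eigDescBasis.mul_le_re_inner_map_self_of_mem_span
      (isSymmetric_toEuclideanLin_iff.mpr hA) hA.toEuclideanLin_eigDescBasis
      fun _ hk => hA.eigDesc_antitone (Finset.mem_Iic.mp hk)⟩

end Matrix.IsHermitian

/-- Indices are 0-based: this is `α³_{i+j-1} ≤ α¹_i + α²_j` for `i + j - 1 ≤ n` in 1-based terms. -/
theorem weyl_inequality {n : ℕ} (A1 A2 A3 : Matrix (Fin n) (Fin n) ℂ)
    (h1 : A1.IsHermitian) (h2 : A2.IsHermitian) (h3 : A3.IsHermitian)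
    (hsum : A3 = A1 + A2) (i j : Fin n) (hij : (i : ℕ) + (j : ℕ) < n) :
    eigDesc h3 ⟨(i : ℕ) + (j : ℕ), hij⟩ ≤ eigDesc h1 i + eigDesc h2 j := by
  obtain ⟨V1, hV1, hx1⟩ := h1.exists_finrank_eq_forall_re_inner_le_eigDesc i
  obtain ⟨V2, hV2, hx2⟩ := h2.exists_finrank_eq_forall_re_inner_le_eigDesc j
  obtain ⟨V3, hV3, hx3⟩ := h3.exists_finrank_eq_forall_eigDesc_le_re_inner ⟨_, hij⟩
  have hdim : 2 * finrank ℂ (EuclideanSpace ℂ (Fin n)) <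
      finrank ℂ V1 + finrank ℂ V2 + finrank ℂ V3 := by
    simp only [finrank_euclideanSpace_fin, hV1, hV2, hV3]
    omega
  obtain ⟨x, ⟨⟨hxV1, hxV2⟩, hxV3⟩, hx0⟩ :=
    exists_mem_ne_zero_of_ne_bot (inf_inf_ne_bot_of_finrank_lt_add_add hdim)
  have hsplit : RCLike.re ⟪x, A3.toEuclideanLin x⟫_ℂ =
      RCLike.re ⟪x, A1.toEuclideanLin x⟫_ℂ + RCLike.re ⟪x, A2.toEuclideanLin x⟫_ℂ := by
    rw [hsum, map_add, LinearMap.add_apply, inner_add_right, map_add]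
  refine le_of_mul_le_mul_right ?_ (pow_pos (norm_pos_iff.mpr hx0) 2)
  calc eigDesc h3 ⟨_, hij⟩ * ‖x‖ ^ 2 ≤ RCLike.re ⟪x, A3.toEuclideanLin x⟫_ℂ := hx3 x hxV3
    _ ≤ (eigDesc h1 i + eigDesc h2 j) * ‖x‖ ^ 2 := by
      rw [hsplit, add_mul]
      exact add_le_add (hx1 x hxV1) (hx2 x hxV2)
end

section
/- Let K be an n×n symmetric positive semi-definite matrix written as K = A + B where A and B are symmetric positive semi-definite, with eigenvalues of K, A, B denoted λ_i, α_i, β_i in decreasing order. Then the tail sum satisfies ∑_{s > T} λ_s ≤ ∑_{s > ⌊T/2⌋} (α_{⌊s/2⌋} + β_{⌊s/2⌋}) for any T with the indices in range. -/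
/-- A finite decreasing eigenvalue list, 1-indexed and extended by zero outside `{1, …, n}`. -/
noncomputable def extSeq {n : ℕ} (f : Fin n → ℝ) : ℕ → ℝ :=
  fun s => if h : 1 ≤ s ∧ s ≤ n then f ⟨s - 1, by omega⟩ else 0

/-!
Weyl's inequality `λ_{i+j-1} ≤ α_i + β_j` for `K = A + B` follows from the Rayleigh quotient: by a
dimension count, the span of the top `i + j - 1` eigenvectors of `K` meets the spans of the bottom
eigenvectors of `A` from index `i` on and of `B` from index `j` on in a nonzero vector `x`, and there
`λ_{i+j-1} ‖x‖² ≤ ⟪x, K x⟫ = ⟪x, A x⟫ + ⟪x, B x⟫ ≤ (α_i + β_j) ‖x‖²`. Taking `i = j = ⌈s/2⌉` gives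
`λ_s ≤ α_{⌈s/2⌉} + β_{⌈s/2⌉}`; summing over `s > T` and shifting `s ↦ s + 1` yields a subsum of the
right-hand side, whose remaining terms are nonnegative.
-/

open scoped RealInnerProductSpace ComplexOrder
open Module Submodule Finset

theorem Submodule.exists_ne_zero_mem_inf_inf {K V : Type*} [DivisionRing K] [AddCommGroup V]
    [Module K V] [FiniteDimensional K V] (U₁ U₂ U₃ : Submodule K V)
    (h : 2 * finrank K V < finrank K U₁ + finrank K U₂ + finrank K U₃) :
    ∃ x ∈ U₁ ⊓ U₂ ⊓ U₃, x ≠ 0 := by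
  rw [← Submodule.ne_bot_iff, Ne, ← Submodule.finrank_eq_zero]
  have h₁₂ := finrank_sup_add_finrank_inf_eq U₁ U₂
  have h₁₂₃ := finrank_sup_add_finrank_inf_eq (U₁ ⊓ U₂) U₃
  have := (U₁ ⊔ U₂).finrank_le
  have := (U₁ ⊓ U₂ ⊔ U₃).finrank_le
  omega

namespace OrthonormalBasis

variable {ι E : Type*} [Fintype ι] [NormedAddCommGroup E] [InnerProductSpace ℝ E]
  (b : OrthonormalBasis ι ℝ E)

theorem inner_eq_zero_of_mem_span_image {S : Set ι} {x : E} (hx : x ∈ span ℝ (b '' S)) {i : ι}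
    (hi : i ∉ S) : ⟪b i, x⟫ = 0 := by
  have hle : span ℝ (b '' S) ≤ (ℝ ∙ b i)ᗮ := by
    rw [span_le]
    rintro _ ⟨j, hj, rfl⟩
    exact mem_orthogonal_singleton_iff_inner_right.mpr
      (b.orthonormal.inner_eq_zero fun hij => hi (hij ▸ hj))
  exact mem_orthogonal_singleton_iff_inner_right.mp (hle hx)

theorem finrank_span_image (S : Finset ι) : finrank ℝ (span ℝ (b '' S)) = #S := by
  rw [Set.image_eq_range]
  exact (finrank_span_eq_card (b.orthonormal.linearIndependent.comp _ Subtype.val_injective)).trans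
    (by simp)

variable {b} {f : E →ₗ[ℝ] E} {μ : ι → ℝ}

theorem inner_map_self_eq_sum (hb : ∀ i, f (b i) = μ i • b i) (x : E) :
    ⟪x, f x⟫ = ∑ i, μ i * ⟪b i, x⟫ ^ 2 := by
  have hfx : f x = ∑ i, (μ i * ⟪b i, x⟫) • b i := by
    conv_lhs => rw [← b.sum_repr' x]
    simp only [map_sum, map_smul, hb, smul_smul, mul_comm]
  rw [hfx, inner_sum]
  refine sum_congr rfl fun i _ => ?_
  rw [inner_smul_right, real_inner_comm]
  ring

theorem inner_map_self_le_of_mem_span (hb : ∀ i, f (b i) = μ i • b i) {S : Set ι} {c : ℝ}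
    (hc : ∀ i ∈ S, μ i ≤ c) {x : E} (hx : x ∈ span ℝ (b '' S)) :
    ⟪x, f x⟫ ≤ c * ‖x‖ ^ 2 := by
  rw [inner_map_self_eq_sum hb, ← b.sum_sq_inner_right, mul_sum]
  refine sum_le_sum fun i _ => ?_
  by_cases hi : i ∈ S
  · exact mul_le_mul_of_nonneg_right (hc i hi) (sq_nonneg _)
  · simp [b.inner_eq_zero_of_mem_span_image hx hi]

theorem le_inner_map_self_of_mem_span (hb : ∀ i, f (b i) = μ i • b i) {S : Set ι} {c : ℝ}
    (hc : ∀ i ∈ S, c ≤ μ i) {x : E} (hx : x ∈ span ℝ (b '' S)) :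
    c * ‖x‖ ^ 2 ≤ ⟪x, f x⟫ := by
  rw [inner_map_self_eq_sum hb, ← b.sum_sq_inner_right, mul_sum]
  refine sum_le_sum fun i _ => ?_
  by_cases hi : i ∈ S
  · exact mul_le_mul_of_nonneg_right (hc i hi) (sq_nonneg _)
  · simp [b.inner_eq_zero_of_mem_span_image hx hi]

end OrthonormalBasis

theorem LinearMap.weyl_inequality {E : Type*} [NormedAddCommGroup E] [InnerProductSpace ℝ E]
    {n : ℕ} {f g : E →ₗ[ℝ] E} {bf bg bfg : OrthonormalBasis (Fin n) ℝ E} {α β γ : Fin n → ℝ}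
    (hα : Antitone α) (hβ : Antitone β) (hγ : Antitone γ)
    (hf : ∀ i, f (bf i) = α i • bf i) (hg : ∀ i, g (bg i) = β i • bg i)
    (hfg : ∀ i, (f + g) (bfg i) = γ i • bfg i) {p q r : Fin n} (hpqr : (q : ℕ) + r ≤ p) :
    γ p ≤ α q + β r := by
  have := bfg.toBasis.finiteDimensional_of_finite
  have hE : finrank ℝ E = n := by simp [finrank_eq_card_basis bfg.toBasis]
  obtain ⟨x, ⟨⟨hx₁, hx₂⟩, hx₃⟩, hx⟩ := exists_ne_zero_mem_inf_inf
    (span ℝ (bfg '' ↑(Iic p))) (span ℝ (bf '' ↑(Ici q))) (span ℝ (bg '' ↑(Ici r))) (by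
      simp only [OrthonormalBasis.finrank_span_image, Fin.card_Iic, Fin.card_Ici, hE]
      omega)
  have hlow := OrthonormalBasis.le_inner_map_self_of_mem_span hfg
    (fun i hi => hγ (mem_Iic.mp hi)) hx₁
  have hupf := OrthonormalBasis.inner_map_self_le_of_mem_span hf
    (fun i hi => hα (mem_Ici.mp hi)) hx₂
  have hupg := OrthonormalBasis.inner_map_self_le_of_mem_span hg
    (fun i hi => hβ (mem_Ici.mp hi)) hx₃
  rw [LinearMap.add_apply, inner_add_right] at hlow
  have hx_pos : 0 < ‖x‖ ^ 2 := by positivity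
  exact le_of_mul_le_mul_right (by rw [add_mul]; linarith) hx_pos

namespace Matrix

theorem PosSemidef.extSeq_eigDesc_nonneg {𝕜 : Type*} [RCLike 𝕜] {n : ℕ}
    {A : Matrix (Fin n) (Fin n) 𝕜} (hA : A.PosSemidef) (s : ℕ) : 0 ≤ extSeq (eigDesc hA.1) s := by
  unfold extSeq
  split
  · exact hA.eigenvalues_nonneg _
  · exact le_rfl

namespace IsHermitian

theorem eigDesc_antitone_s6 {𝕜 : Type*} [RCLike 𝕜] {n : ℕ} {A : Matrix (Fin n) (Fin n) 𝕜}
    (hA : A.IsHermitian) : Antitone (eigDesc hA) := fun _ _ hij =>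
  Tuple.monotone_sort hA.eigenvalues (Fin.rev_le_rev.mpr hij)

variable {n : ℕ} {A B : Matrix (Fin n) (Fin n) ℝ}

noncomputable def eigenvectorBasisDesc (hA : A.IsHermitian) :
    OrthonormalBasis (Fin n) ℝ (EuclideanSpace ℝ (Fin n)) :=
  hA.eigenvectorBasis.reindex (Fin.revPerm.trans (Tuple.sort hA.eigenvalues)).symm

theorem toEuclideanLin_eigenvectorBasisDesc (hA : A.IsHermitian) (i : Fin n) :
    toEuclideanLin A (hA.eigenvectorBasisDesc i) = eigDesc hA i • hA.eigenvectorBasisDesc i := by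
  have hi : hA.eigenvectorBasisDesc i = hA.eigenvectorBasis (Tuple.sort hA.eigenvalues i.rev) := by
    simp [eigenvectorBasisDesc, Fin.revPerm]
  rw [hi]
  exact WithLp.ofLp_injective 2 (hA.mulVec_eigenvectorBasis _)

theorem eigDesc_add_le (hA : A.IsHermitian) (hB : B.IsHermitian) (hAB : (A + B).IsHermitian)
    {p q r : Fin n} (hpqr : (q : ℕ) + r ≤ p) : eigDesc hAB p ≤ eigDesc hA q + eigDesc hB r :=
  LinearMap.weyl_inequality hA.eigDesc_antitone_s6 hB.eigDesc_antitone_s6 hAB.eigDesc_antitone_s6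
    hA.toEuclideanLin_eigenvectorBasisDesc hB.toEuclideanLin_eigenvectorBasisDesc
    (by simpa only [map_add] using hAB.toEuclideanLin_eigenvectorBasisDesc) hpqr

theorem extSeq_eigDesc_add_le (hA : A.IsHermitian) (hB : B.IsHermitian)
    (hAB : (A + B).IsHermitian) {s : ℕ} (hs₀ : 1 ≤ s) (hs : s ≤ n) :
    extSeq (eigDesc hAB) s ≤
      extSeq (eigDesc hA) ((s + 1) / 2) + extSeq (eigDesc hB) ((s + 1) / 2) := by
  have hk : 1 ≤ (s + 1) / 2 ∧ (s + 1) / 2 ≤ n := by omega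
  unfold extSeq
  rw [dif_pos ⟨hs₀, hs⟩, dif_pos hk, dif_pos hk]
  exact eigDesc_add_le hA hB hAB (by simp only; omega)

end IsHermitian

end Matrix

theorem sum_Icc_le_sum_Icc_div_two {a b : ℕ → ℝ} {n T : ℕ}
    (hab : ∀ s ∈ Icc (T + 1) n, a s ≤ b ((s + 1) / 2)) (hb : ∀ s, 0 ≤ b s) :
    ∑ s ∈ Icc (T + 1) n, a s ≤ ∑ s ∈ Icc (T / 2 + 1) (2 * n + 1), b (s / 2) :=
  calc ∑ s ∈ Icc (T + 1) n, a s
    _ ≤ ∑ s ∈ Icc (T + 1) n, b ((s + 1) / 2) := sum_le_sum hab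
    _ = ∑ s ∈ Icc (T + 1 + 1) (n + 1), b (s / 2) := by rw [← map_add_right_Icc, sum_map]; rfl
    _ ≤ ∑ s ∈ Icc (T / 2 + 1) (2 * n + 1), b (s / 2) :=
      sum_le_sum_of_subset_of_nonneg (Icc_subset_Icc (by omega) (by omega)) fun _ _ _ => hb _

theorem tail_sum_eigenvalues_le_general {n : ℕ} (A B : Matrix (Fin n) (Fin n) ℝ)
    (hA : A.PosSemidef) (hB : B.PosSemidef) (hK : (A + B).PosSemidef)
    (T : ℕ) :
    ∑ s ∈ Finset.Icc (T + 1) n, extSeq (eigDesc hK.1) s ≤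
      ∑ s ∈ Finset.Icc (T / 2 + 1) (2 * n + 1),
        (extSeq (eigDesc hA.1) (s / 2) + extSeq (eigDesc hB.1) (s / 2)) :=
  sum_Icc_le_sum_Icc_div_two
    (fun s hs => hA.1.extSeq_eigDesc_add_le hB.1 hK.1 (by grind) (mem_Icc.mp hs).2)
    fun s => add_nonneg (hA.extSeq_eigDesc_nonneg s) (hB.extSeq_eigDesc_nonneg s)

/-- Tail sums of eigenvalues of `K = A + B` (all symmetric PSD) are bounded by tail sums of the
halved-index eigenvalue sequences of `A` and `B`: for any `T` with the indices in range,
`∑_{s > T} λ_s ≤ ∑_{s > ⌊T/2⌋} (α_{⌊s/2⌋} + β_{⌊s/2⌋})`. -/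
theorem tail_sum_eigenvalues_le {n : ℕ} (A B : Matrix (Fin n) (Fin n) ℝ)
    (hA : A.PosSemidef) (hB : B.PosSemidef) (hK : (A + B).PosSemidef)
    (T : ℕ) (hT : 2 ≤ T) :
    ∑ s ∈ Finset.Icc (T + 1) n, extSeq (eigDesc hK.1) s ≤
      ∑ s ∈ Finset.Icc (T / 2 + 1) (2 * n + 1),
        (extSeq (eigDesc hA.1) (s / 2) + extSeq (eigDesc hB.1) (s / 2)) :=
  tail_sum_eigenvalues_le_general A B hA hB hK T
end

section
/- Let X, X_1, ..., X_n be i.i.d. random variables uniformly distributed on [0,1]^d, and let L_∞(d,n) denote the expected Chebyshev (sup-norm) distance from X to its nearest point among X_1,...,X_n. Then L_∞(d,n) ≥ d / (2(d+1) n^{1/d}). -/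
open MeasureTheory Set ENNReal

lemma nn_pair_bound {d n : ℕ} (μ : Measure (Fin d → ℝ)) [IsProbabilityMeasure μ]
    (j : Fin n) (t : ℝ) (c : ℝ≥0∞) (hball : ∀ x, μ (Metric.closedBall x t) ≤ c) :
    Measure.pi (fun _ : Fin (n+1) => μ) {p | dist (p 0) (p j.succ) ≤ t} ≤ c := by
  set ρ : Measure (Fin n → Fin d → ℝ) := Measure.pi fun _ => μ with hρ
  have hmp := measurePreserving_piFinSuccAbove (fun _ : Fin (n+1) => μ) 0
  set e := MeasurableEquiv.piFinSuccAbove (fun _ : Fin (n+1) => (Fin d → ℝ)) 0 with he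
  set T : Set ((Fin d → ℝ) × (Fin n → Fin d → ℝ)) := {q | dist q.1 (q.2 j) ≤ t} with hT
  have hTmeas : MeasurableSet T := by
    have : Continuous fun q : (Fin d → ℝ) × (Fin n → Fin d → ℝ) => dist q.1 (q.2 j) :=
      continuous_fst.dist ((continuous_apply j).comp continuous_snd)
    exact measurableSet_le this.measurable measurable_const
  have hpre : e ⁻¹' T = {p | dist (p 0) (p j.succ) ≤ t} := by
    ext p
    simp [hT, he, MeasurableEquiv.piFinSuccAbove, Fin.succAbove, Fin.insertNthEquiv, Fin.tail]
  rw [← hpre, hmp.measure_preimage hTmeas.nullMeasurableSet]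
  rw [Measure.prod_apply hTmeas]
  have inner : ∀ x : Fin d → ℝ, ρ (Prod.mk x ⁻¹' T) ≤ c := by
    intro x
    have hset : Prod.mk x ⁻¹' T = Function.eval j ⁻¹' (Metric.closedBall x t) := by
      ext y
      simp [hT, Metric.mem_closedBall, dist_comm]
    rw [hset, Set.eval_preimage]
    rw [hρ, Measure.pi_pi]
    rw [Finset.prod_eq_single j (fun i _ hij => by simp [Function.update_apply, hij])
      (fun h => absurd (Finset.mem_univ j) h)]
    simpa using hball x
  calc ∫⁻ x, ρ (Prod.mk x ⁻¹' T) ∂μ ≤ ∫⁻ _, c ∂μ := lintegral_mono inner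
    _ = c := by simp

/-- Lower bound on the expected Chebyshev nearest-neighbor distance: if `X, X_1, …, X_n` are
i.i.d. uniform on `[0,1]^d` (the distance on `Fin d → ℝ` is the sup-norm distance), then
`E[min_j ‖X − X_j‖_∞] ≥ d / (2(d+1) n^{1/d})`. -/
theorem expected_nearest_neighbor_dist_ge (d n : ℕ) (hd : 1 ≤ d) (hn : 1 ≤ n) :
    (d : ℝ) / (2 * ((d : ℝ) + 1) * (n : ℝ) ^ (1 / (d : ℝ))) ≤
      ∫ p : Fin (n + 1) → (Fin d → ℝ),
        (⨅ j : Fin n, dist (p 0) (p j.succ))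
        ∂(Measure.pi fun _ =>
          (volume : Measure (Fin d → ℝ)).restrict (Set.univ.pi fun _ => Set.Icc 0 1)) := by
  haveI : Nonempty (Fin n) := Fin.pos_iff_nonempty.mp hn
  set cube : Set (Fin d → ℝ) := Set.univ.pi fun _ => Set.Icc 0 1 with hcube
  set μ : Measure (Fin d → ℝ) := volume.restrict cube with hμdef
  have hcubemeas : MeasurableSet cube := MeasurableSet.univ_pi fun _ => measurableSet_Icc
  have hcubevol : (volume : Measure (Fin d → ℝ)) cube = 1 := by
    rw [hcube, volume_pi_pi]; simp
  haveI hμprob : IsProbabilityMeasure μ := by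
    constructor
    rw [hμdef, Measure.restrict_apply_univ, hcubevol]
  set ν : Measure (Fin (n+1) → Fin d → ℝ) := Measure.pi fun _ => μ with hνdef
  haveI hνprob : IsProbabilityMeasure ν := by infer_instance
  set f : (Fin (n+1) → Fin d → ℝ) → ℝ := fun p => ⨅ j : Fin n, dist (p 0) (p j.succ) with hfdef
  have fcont : Continuous f := by
    have : f = fun p => Finset.univ.inf' Finset.univ_nonempty
        (fun j : Fin n => dist (p 0) (p j.succ)) := by
      funext p
      exact (Finset.inf'_univ_eq_ciInf _).symm
    rw [this]
    apply Continuous.finset_inf'_apply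
    intro j _
    exact (continuous_apply 0).dist (continuous_apply j.succ)
  have fnn : ∀ p, 0 ≤ f p := fun p => Real.iInf_nonneg fun j => dist_nonneg
  -- ball bound
  have hball : ∀ (x : Fin d → ℝ) (t : ℝ), 0 ≤ t →
      μ (Metric.closedBall x t) ≤ ENNReal.ofReal ((2*t)^d) := by
    intro x t ht
    refine le_trans (Measure.restrict_le_self _) ?_
    rw [closedBall_pi x ht, volume_pi_pi]
    have hone : ∀ i : Fin d, (volume (Metric.closedBall (x i) t)) = ENNReal.ofReal (2*t) := by
      intro i
      rw [Real.closedBall_eq_Icc, Real.volume_Icc]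
      ring_nf
    rw [Finset.prod_congr rfl (fun i _ => hone i), Finset.prod_const, Finset.card_univ,
      Fintype.card_fin, ← ENNReal.ofReal_pow (by positivity)]
  -- union bound
  have hunion : ∀ t : ℝ, 0 ≤ t →
      ν {p | f p ≤ t} ≤ ENNReal.ofReal ((n:ℝ) * (2*t)^d) := by
    intro t ht
    have hsub : {p | f p ≤ t} ⊆ ⋃ j : Fin n, {p | dist (p 0) (p j.succ) ≤ t} := by
      intro p hp
      obtain ⟨j, hj⟩ := exists_eq_ciInf_of_finite (f := fun j : Fin n => dist (p 0) (p j.succ))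
      exact Set.mem_iUnion.mpr ⟨j, by rw [Set.mem_setOf_eq, hj]; exact hp⟩
    calc ν {p | f p ≤ t} ≤ ∑' j : Fin n, ν {p | dist (p 0) (p j.succ) ≤ t} :=
          le_trans (measure_mono hsub) (measure_iUnion_le _)
      _ = ∑ j : Fin n, ν {p | dist (p 0) (p j.succ) ≤ t} := tsum_fintype _
      _ ≤ ∑ _j : Fin n, ENNReal.ofReal ((2*t)^d) :=
          Finset.sum_le_sum fun j _ => nn_pair_bound μ j t _ (fun x => hball x t ht)
      _ = (n : ℝ≥0∞) * ENNReal.ofReal ((2*t)^d) := by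
          rw [Finset.sum_const, Finset.card_univ, Fintype.card_fin, nsmul_eq_mul]
      _ = ENNReal.ofReal ((n:ℝ) * (2*t)^d) := by
          rw [ENNReal.ofReal_mul (by positivity), ENNReal.ofReal_natCast]
  -- complement bound
  have hcompl : ∀ t : ℝ, 0 ≤ t →
      ENNReal.ofReal (1 - (n:ℝ) * (2*t)^d) ≤ ν {p | t < f p} := by
    intro t ht
    have hms : MeasurableSet {p | f p ≤ t} := measurableSet_le fcont.measurable measurable_const
    have hset : {p | t < f p} = {p | f p ≤ t}ᶜ := by ext p; simp
    rw [hset, prob_compl_eq_one_sub hms]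
    calc ENNReal.ofReal (1 - (n:ℝ) * (2*t)^d)
        = 1 - ENNReal.ofReal ((n:ℝ) * (2*t)^d) := by
          rw [ENNReal.ofReal_sub _ (by positivity), ENNReal.ofReal_one]
      _ ≤ 1 - ν {p | f p ≤ t} := tsub_le_tsub_left (hunion t ht) 1
  -- constants
  have hd0 : (0:ℝ) < d := by exact_mod_cast hd
  have hn0 : (0:ℝ) < n := by exact_mod_cast hn
  set N : ℝ := (n : ℝ) ^ (1 / (d : ℝ)) with hN
  have hN0 : 0 < N := Real.rpow_pos_of_pos hn0 _
  have hNd : N ^ d = (n : ℝ) := by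
    rw [hN, ← Real.rpow_natCast ((n:ℝ) ^ (1/(d:ℝ))) d, ← Real.rpow_mul hn0.le,
      one_div, inv_mul_cancel₀ (by exact_mod_cast hd0.ne'), Real.rpow_one]
  set T : ℝ := 1 / (2 * N) with hT
  have hT0 : 0 < T := by rw [hT]; positivity
  have hkey : (n:ℝ) * (2*T)^d = 1 := by
    rw [hT]
    rw [show 2 * (1/(2*N)) = 1/N by field_simp]
    rw [div_pow, one_pow, hNd]
    field_simp
  -- nonneg of integrand on Ioc 0 T
  have hgnn : ∀ t ∈ Ioc (0:ℝ) T, 0 ≤ 1 - (n:ℝ) * (2*t)^d := by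
    intro t ht
    have h1 : (n:ℝ) * (2*t)^d ≤ (n:ℝ) * (2*T)^d := by
      apply mul_le_mul_of_nonneg_left _ hn0.le
      exact pow_le_pow_left₀ (by linarith [ht.1]) (by linarith [ht.2]) d
    rw [← hkey] at *
    linarith
  -- integrability of f
  have hS : MeasurableSet (Set.univ.pi fun _ : Fin (n+1) => cube) :=
    MeasurableSet.univ_pi fun _ => hcubemeas
  have hνS : ν (Set.univ.pi fun _ : Fin (n+1) => cube) = 1 := by
    rw [hνdef, Measure.pi_pi]
    have : μ cube = 1 := by
      rw [hμdef, Measure.restrict_apply hcubemeas, Set.inter_self, hcubevol]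
    simp [this]
  have hae : ∀ᵐ p ∂ν, p ∈ (Set.univ.pi fun _ : Fin (n+1) => cube) := by
    rw [ae_iff]
    have : {p | ¬ p ∈ (Set.univ.pi fun _ : Fin (n+1) => cube)} =
        (Set.univ.pi fun _ : Fin (n+1) => cube)ᶜ := rfl
    rw [this, measure_compl hS (measure_ne_top ν _), hνS, measure_univ, tsub_self]
  have hbdd : ∀ p ∈ (Set.univ.pi fun _ : Fin (n+1) => cube), f p ≤ 1 := by
    intro p hp
    obtain ⟨j⟩ := ‹Nonempty (Fin n)›
    have hb : BddBelow (Set.range fun j : Fin n => dist (p 0) (p j.succ)) :=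
      ⟨0, fun y ⟨k, hk⟩ => hk ▸ dist_nonneg⟩
    refine le_trans (ciInf_le hb j) ?_
    rw [← show (1:ℝ) - 0 = 1 by ring]
    refine (dist_pi_le_iff (by norm_num)).mpr fun i => ?_
    have h0 := hp 0 (Set.mem_univ _) i (Set.mem_univ _)
    have h1 := hp j.succ (Set.mem_univ _) i (Set.mem_univ _)
    calc dist (p 0 i) (p j.succ i) ≤ 1 := Real.dist_le_of_mem_Icc_01 h0 h1
      _ = 1 - 0 := by ring
  have hIf : Integrable f ν := by
    refine Integrable.mono' (integrable_const (1:ℝ)) fcont.aestronglyMeasurable ?_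
    filter_upwards [hae] with p hp
    rw [Real.norm_eq_abs, abs_of_nonneg (fnn p)]
    exact hbdd p hp
  -- integrability of g on Ioc 0 T
  have hgcont : Continuous fun t : ℝ => 1 - (n:ℝ) * (2*t)^d := by fun_prop
  have hgint : IntegrableOn (fun t : ℝ => 1 - (n:ℝ) * (2*t)^d) (Ioc 0 T) :=
    hgcont.integrableOn_Ioc
  have hgnn' : 0 ≤ᵐ[volume.restrict (Ioc 0 T)] fun t : ℝ => 1 - (n:ℝ) * (2*t)^d :=
    (ae_restrict_iff' measurableSet_Ioc).mpr (ae_of_all _ hgnn)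
  -- value of the g integral
  have hval : ∫ t in Ioc 0 T, (1 - (n:ℝ) * (2*t)^d) =
      (d : ℝ) / (2 * ((d : ℝ) + 1) * N) := by
    rw [← intervalIntegral.integral_of_le hT0.le]
    have : (fun t : ℝ => 1 - (n:ℝ) * (2*t)^d) =
        fun t : ℝ => 1 - ((n:ℝ) * 2^d) * t^d := by
      funext t; rw [mul_pow]; ring
    rw [this]
    rw [intervalIntegral.integral_sub intervalIntegrable_const
      ((intervalIntegral.intervalIntegrable_pow d).const_mul _),
      intervalIntegral.integral_const, intervalIntegral.integral_const_mul, integral_pow]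
    have hc : ((n:ℝ) * 2^d) * T^d = 1 := by rw [← hkey]; rw [mul_pow]; ring
    have hz : (0:ℝ) ^ (d+1) = 0 := zero_pow (by omega)
    rw [hz, sub_zero, pow_succ, smul_eq_mul, mul_one]
    have h6 : (n:ℝ) * 2^d * (T ^ d * T / ((d:ℝ)+1)) = T / ((d:ℝ)+1) := by
      rw [show (n:ℝ) * 2^d * (T^d*T/((d:ℝ)+1)) = ((n:ℝ) * 2^d * T^d)*(T/((d:ℝ)+1)) from by
        ring, hc, one_mul]
    push_cast
    rw [sub_zero, h6, hT]
    have hNne : N ≠ 0 := hN0.ne'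
    have hdne : (d:ℝ) + 1 ≠ 0 := by positivity
    field_simp
    ring
  -- main chain in ℝ≥0∞
  have main : ENNReal.ofReal (∫ t in Ioc 0 T, (1 - (n:ℝ) * (2*t)^d))
      ≤ ENNReal.ofReal (∫ p, f p ∂ν) := by
    rw [ofReal_integral_eq_lintegral_ofReal hIf (ae_of_all _ fnn),
      lintegral_eq_lintegral_meas_lt ν (ae_of_all _ fnn) fcont.measurable.aemeasurable,
      ofReal_integral_eq_lintegral_ofReal hgint hgnn']
    refine le_trans ?_ (lintegral_mono_set (μ := volume) (s := Ioc (0:ℝ) T) (t := Ioi (0:ℝ))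
      (f := fun t => ν {a | t < f a}) Ioc_subset_Ioi_self)
    refine setLIntegral_mono' measurableSet_Ioc fun t ht => ?_
    exact hcompl t ht.1.le
  rw [hval] at main
  have := (ENNReal.ofReal_le_ofReal_iff (integral_nonneg fnn)).mp main
  exact this
end
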